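/- Let A be an abelian group, let D = Dih(A) be the generalized dihedral group on A with distinguished involution x, let S ⊆ D be closed under inversion and not contain the identity, and let Γ = Cay(D, S). Suppose y ∈ xA is such that for every a ∈ A, y·a ∈ S if and only if y·a⁻¹ ∈ S. Then the map β : D → D defined by β(z) = y·z is an automorphism of Γ. -/

import Mathlib

/-- The generalized dihedral group `Dih(A)` on an abelian group `A`:
elements `r a` form the copy of `A`, and `sr a = x * r a` lie in the coset `xA`,
where `x = sr 1` is the distinguished involution inverting `A`. -/
inductive GenDihedral (A : Type*) : Type _
  | r : A → GenDihedral A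
  | sr : A → GenDihedral A

namespace GenDihedral

variable {A : Type*} [CommGroup A]

instance : One (GenDihedral A) := ⟨r 1⟩

instance : Inv (GenDihedral A) :=
  ⟨fun g => match g with
    | r a => r a⁻¹
    | sr a => sr a⟩

instance : Mul (GenDihedral A) :=
  ⟨fun g h => match g, h with
    | r a, r b => r (a * b)
    | r a, sr b => sr (b * a⁻¹)
    | sr a, r b => sr (a * b)
    | sr a, sr b => r (b * a⁻¹)⟩

@[simp] theorem r_mul_r (a b : A) : r a * r b = r (a * b) := rfl
@[simp] theorem r_mul_sr (a b : A) : r a * sr b = sr (b * a⁻¹) := rfl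
@[simp] theorem sr_mul_r (a b : A) : sr a * r b = sr (a * b) := rfl
@[simp] theorem sr_mul_sr (a b : A) : sr a * sr b = r (b * a⁻¹) := rfl
@[simp] theorem one_def : (1 : GenDihedral A) = r 1 := rfl
@[simp] theorem inv_r (a : A) : (r a)⁻¹ = r a⁻¹ := rfl
@[simp] theorem inv_sr (a : A) : (sr a)⁻¹ = sr a := rfl

instance : Group (GenDihedral A) :=
  Group.ofLeftAxioms
    (by rintro (a | a) (b | b) (c | c) <;>
      simp [mul_assoc, mul_comm, mul_left_comm])
    (by rintro (a | a) <;> simp)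
    (by rintro (a | a) <;> simp)

/-- The canonical embedding of `A` into `Dih(A)`. -/
def rHom : A →* GenDihedral A where
  toFun := r
  map_one' := rfl
  map_mul' _ _ := rfl

/-- The distinguished involution `x` of `Dih(A)`, inverting `A` by conjugation. -/
def x (A : Type*) [CommGroup A] : GenDihedral A := sr (1 : A)

/-- The coset `xA` of `A` in `Dih(A)`, i.e. the elements of `Dih(A)` outside `A`. -/
def xA (A : Type*) [CommGroup A] : Set (GenDihedral A) :=
  {z : GenDihedral A | ∃ a : A, z = x A * rHom a}

end GenDihedral

/-- The Cayley graph `Cay(G, S)` of a group `G` with inverse-closed, identity-free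
connection set `S`: vertices `u` and `v` are adjacent iff `v = s * u` for some `s ∈ S`,
i.e. iff `v * u⁻¹ ∈ S`. -/
def cayleyGraph {G : Type*} [Group G] (S : Set G) (hsym : ∀ s ∈ S, s⁻¹ ∈ S)
    (hid : (1 : G) ∉ S) : SimpleGraph G where
  Adj u v := v * u⁻¹ ∈ S
  symm := by
    constructor
    intro u v h
    simpa [mul_inv_rev] using hsym _ h
  loopless := by
    constructor
    intro u h
    exact hid (by simpa using h)

/-! Conjugation by `y = sr b` inverts the elements of `A` and maps `y * a` to `y * a⁻¹`, so the
hypotheses say exactly that `S` is invariant under conjugation by `y`. Left multiplication by an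
element normalising `S` preserves `v * u⁻¹ ∈ S`, hence is an automorphism of `Cay(D, S)`. -/

def cayleyGraph.mulLeftIso {G : Type*} [Group G] {S : Set G} (hsym : ∀ s ∈ S, s⁻¹ ∈ S)
    (hid : (1 : G) ∉ S) (g : G) (hg : ∀ s, g * s * g⁻¹ ∈ S ↔ s ∈ S) :
    cayleyGraph S hsym hid ≃g cayleyGraph S hsym hid where
  toEquiv := Equiv.mulLeft g
  map_rel_iff' {u v} := by
    show g * v * (g * u)⁻¹ ∈ S ↔ v * u⁻¹ ∈ S
    rw [← hg (v * u⁻¹)]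
    group

namespace GenDihedral

variable {A : Type*} [CommGroup A]

theorem mem_xA_iff {y : GenDihedral A} : y ∈ xA A ↔ ∃ b, y = sr b := by
  simp [xA, x, rHom]

theorem sr_mul_r_mul_sr_inv (b a : A) : sr b * r a * (sr b)⁻¹ = r a⁻¹ := by
  simp [mul_comm]

theorem sr_mul_sr_mul_r_mul_sr_inv (b c : A) :
    sr b * (sr b * r c) * (sr b)⁻¹ = sr b * (r c)⁻¹ := by
  simp

theorem sr_eq_sr_mul_r (b a : A) : sr a = sr b * r (b⁻¹ * a) := by
  simp

theorem conj_mem_iff_of_mem_xA {S : Set (GenDihedral A)} (hsym : ∀ s ∈ S, s⁻¹ ∈ S)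
    {y : GenDihedral A} (hy : y ∈ xA A) (hS : ∀ a : A, y * rHom a ∈ S ↔ y * (rHom a)⁻¹ ∈ S)
    (s : GenDihedral A) : y * s * y⁻¹ ∈ S ↔ s ∈ S := by
  obtain ⟨b, rfl⟩ := mem_xA_iff.1 hy
  rcases s with a | a
  · rw [sr_mul_r_mul_sr_inv]
    exact ⟨fun h => by simpa using hsym _ h, fun h => hsym _ h⟩
  · rw [sr_eq_sr_mul_r b a, sr_mul_sr_mul_r_mul_sr_inv]
    exact (hS _).symm

end GenDihedral

/-- If `y ∈ xA` satisfies `y * a ∈ S ↔ y * a⁻¹ ∈ S` for all `a ∈ A`, then left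
multiplication `β(z) = y * z` is an automorphism of `Cay(Dih(A), S)`. -/
theorem stmt7 {A : Type*} [CommGroup A]
    (S : Set (GenDihedral A)) (hsym : ∀ s ∈ S, s⁻¹ ∈ S) (hid : (1 : GenDihedral A) ∉ S)
    (y : GenDihedral A) (hy : y ∈ GenDihedral.xA A)
    (hS : ∀ a : A, y * GenDihedral.rHom a ∈ S ↔ y * (GenDihedral.rHom a)⁻¹ ∈ S) :
    ∃ φ : cayleyGraph S hsym hid ≃g cayleyGraph S hsym hid,
      ∀ z : GenDihedral A, φ z = y * z :=
  ⟨cayleyGraph.mulLeftIso hsym hid y (GenDihedral.conj_mem_iff_of_mem_xA hsym hy hS), fun _ => rfl⟩
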